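/- arXiv:2508.13106 — 9 statements merged into one kernel-verified Lean document; each statement's English description precedes it below -/
import Mathlib

section
/- Let p be a prime and let R be a commutative ring such that x ^ p = x for every x ∈ R. If R is finitely generated as a ring, then R is a finite ring. -/
/-!
Every element is a root of the monic polynomial `X ^ p - X`, so `R` is a finitely generated
integral `ℤ`-algebra, hence a finitely generated abelian group. It is also torsion, because
`(2 x) ^ p = 2 x` gives `(2 ^ p - 2) x = 0`; a finitely generated torsion abelian group is finite.
-/

open Polynomial

section PowEqSelf

variable {R : Type*} [CommRing R] {n : ℕ}

theorem isIntegral_int_of_pow_eq_self (hn : 1 < n) {x : R} (hx : x ^ n = x) : IsIntegral ℤ x :=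
  ⟨X ^ n - X, monic_X_pow_sub (by rw [degree_X]; exact_mod_cast hn), by simp [hx]⟩

theorem isAddTorsion_of_forall_pow_eq_self (hn : 1 < n) (h : ∀ x : R, x ^ n = x) :
    IsAddTorsion R := by
  intro x
  have two_pow_mul : (2 : R) ^ n * x = 2 * x := by
    simpa only [mul_pow, h x] using h (2 * x)
  have two_lt : (2 : ℤ) < 2 ^ n := by
    simpa using pow_lt_pow_right₀ (by norm_num : (1 : ℤ) < 2) hn
  refine isOfFinAddOrder_iff_zsmul_eq_zero.mpr ⟨2 ^ n - 2, by omega, ?_⟩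
  rw [zsmul_eq_mul, Int.cast_sub, Int.cast_pow, Int.cast_ofNat, sub_mul, two_pow_mul, sub_self]

end PowEqSelf

theorem Algebra.FiniteType.int_of_subring_closure_eq_top {R : Type*} [CommRing R] (S : Finset R)
    (h : Subring.closure (S : Set R) = ⊤) : Algebra.FiniteType ℤ R :=
  ⟨Subalgebra.fg_def.mpr ⟨S, S.finite_toSet, by
    rw [Algebra.adjoin_int, h]
    rfl⟩⟩

/-- A `p`-Boolean ring which is finitely generated as a ring is finite. -/
theorem pBoolean_finite_of_fg (p : ℕ) (hp : p.Prime) (R : Type*) [CommRing R]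
    (hR : ∀ x : R, x ^ p = x) (S : Finset R)
    (h : Subring.closure (S : Set R) = ⊤) : Finite R := by
  have : Algebra.FiniteType ℤ R := .int_of_subring_closure_eq_top S h
  have : Algebra.IsIntegral ℤ R := ⟨fun x => isIntegral_int_of_pow_eq_self hp.one_lt (hR x)⟩
  have : AddGroup.FG R := Module.Finite.iff_addGroup_fg.mp Algebra.IsIntegral.finite
  exact AddCommGroup.finite_of_fg_isAddTorsion R (isAddTorsion_of_forall_pow_eq_self hp.one_lt hR)
end

section
/- Every finite Boolean ring R is isomorphic, as a ring, to a ring of functions (I → ZMod 2) for some finite type I. That is, there exist a finite type I and a ring isomorphism R ≃+* (I → ZMod 2). -/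
/-!
A Boolean ring is reduced, so a finite one is, by the Chinese remainder theorem, the product of its
residue fields at maximal ideals. Each residue field is again Boolean, and a Boolean domain is
`ZMod 2`, because `x * (1 + x) = 0` forces `x = 0` or `x = 1`.
-/

namespace BooleanRing

variable {R : Type*} [BooleanRing R]

instance : IsReduced R :=
  ⟨fun x => (isIdempotentElem x).eq_zero_of_isNilpotent⟩

instance (I : Ideal R) : BooleanRing (R ⧸ I) where
  isIdempotentElem := Ideal.Quotient.mk_surjective.forall.2 fun x =>
    (isIdempotentElem x).map (Ideal.Quotient.mk I)

theorem eq_zero_or_eq_one [NoZeroDivisors R] (x : R) : x = 0 ∨ x = 1 := by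
  rcases mul_eq_zero.1 (mul_one_add_self x) with hx | hx
  · exact .inl hx
  · exact .inr ((add_eq_zero' _ _).1 hx).symm

instance [Nontrivial R] : CharP R 2 :=
  (CharP.charP_iff_prime_eq_zero Nat.prime_two).2 <| by
    rw [Nat.cast_two, ← one_add_one_eq_two, add_self]

noncomputable def zmodTwoEquivOfIsDomain [IsDomain R] : ZMod 2 ≃+* R :=
  RingEquiv.ofBijective (ZMod.castHom dvd_rfl R) ⟨(ZMod.castHom dvd_rfl R).injective, fun x => by
    rcases eq_zero_or_eq_one x with rfl | rfl
    · exact ⟨0, map_zero _⟩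
    · exact ⟨1, map_one _⟩⟩

noncomputable def equivPiZModTwo [IsArtinianRing R] : R ≃+* (MaximalSpectrum R → ZMod 2) :=
  (IsArtinianRing.equivPi R).toRingEquiv.trans
    (RingEquiv.piCongrRight fun _ => zmodTwoEquivOfIsDomain.symm)

end BooleanRing

/-- Every finite Boolean ring is isomorphic to a ring of functions `I → ZMod 2`
for some finite type `I`. -/
theorem finite_boolean_ring_iso_functions (R : Type*) [BooleanRing R] [Finite R] :
    ∃ (I : Type) (_ : Finite I), Nonempty (R ≃+* (I → ZMod 2)) := by
  obtain ⟨n, ⟨e⟩⟩ := Finite.exists_equiv_fin (MaximalSpectrum R)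
  exact ⟨Fin n, inferInstance,
    ⟨BooleanRing.equivPiZModTwo.trans (RingEquiv.piCongrLeft' (fun _ => ZMod 2) e)⟩⟩
end

section
/- Let p be a prime and S a finite type. The map sending s : S to the evaluation homomorphism ev_s : (S → ZMod p) →+* ZMod p, ev_s f = f s, is a bijection from S onto the set of ring homomorphisms (S → ZMod p) →+* ZMod p. In particular, every ring homomorphism (S → ZMod p) → ZMod p is evaluation at a unique point of S. -/
/-!
Ring homomorphisms out of `ZMod p` are unique, so a ring homomorphism `φ : (S → ZMod p) →+* ZMod p`
is automatically `ZMod p`-linear. Its values on the indicator functions `Pi.single s 1` are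
idempotents of the field `ZMod p` summing to `1`, so `φ (Pi.single s 1) = 1` for some `s`, and then
`φ f = φ (f * Pi.single s 1) = φ (f s • Pi.single s 1) = f s`.
-/

open Function

def RingHom.toZModAlgHom {n : ℕ} {A B : Type*} [Ring A] [Ring B] [Algebra (ZMod n) A]
    [Algebra (ZMod n) B] (f : A →+* B) : A →ₐ[ZMod n] B :=
  { f with
    commutes' := fun c =>
      RingHom.congr_fun (RingHom.ext_zmod (f.comp (algebraMap (ZMod n) A)) (algebraMap _ B)) c }

section Pi

variable {S R : Type*} [CommRing R]

theorem Pi.evalRingHom_injective [Nontrivial R] :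
    Injective fun s : S => Pi.evalRingHom (fun _ : S => R) s := by
  classical
  intro s t hst
  by_contra hne
  have h := RingHom.congr_fun hst (Pi.single s 1)
  simp [Ne.symm hne] at h

theorem Pi.exists_eq_evalAlgHom [IsDomain R] [Finite S] (φ : (S → R) →ₐ[R] R) :
    ∃ s, φ = Pi.evalAlgHom R (fun _ : S => R) s := by
  classical
  have := Fintype.ofFinite S
  have hφe := (CompleteOrthogonalIdempotents.single (fun _ : S => R)).map φ.toRingHom
  obtain ⟨s, hs⟩ : ∃ s, φ (Pi.single s 1) = 1 := by
    by_contra! hne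
    have hzero : ∀ s, φ (Pi.single s 1) = 0 := fun s =>
      ((IsIdempotentElem.iff_eq_zero_or_one.mp (hφe.idem s)).resolve_right (hne s))
    simpa [hzero] using hφe.complete
  refine ⟨s, AlgHom.ext fun f => ?_⟩
  have hsingle : f * Pi.single s 1 = f s • Pi.single s 1 := by
    ext t
    by_cases ht : t = s <;> simp [ht]
  calc φ f = φ (f * Pi.single s 1) := by rw [map_mul, hs, mul_one]
    _ = f s := by rw [hsingle, map_smul, hs, smul_eq_mul, mul_one]

end Pi

/-- For a prime `p` and a finite type `S`, every ring homomorphism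
`(S → ZMod p) →+* ZMod p` is evaluation at a unique point of `S`. -/
theorem eval_bijective (p : ℕ) (hp : p.Prime) (S : Type*) [Finite S] :
    Function.Bijective
      (fun s : S => Pi.evalRingHom (fun _ : S => ZMod p) s) := by
  have : Fact p.Prime := ⟨hp⟩
  refine ⟨Pi.evalRingHom_injective, fun φ => ?_⟩
  obtain ⟨s, hs⟩ := Pi.exists_eq_evalAlgHom φ.toZModAlgHom
  exact ⟨s, RingHom.ext fun f => (AlgHom.congr_fun hs f).symm⟩
end

section
/- Let p be a prime and n a natural number. The evaluation map from the multivariate polynomial ring MvPolynomial (Fin n) (ZMod p) to the function ring ((Fin n → ZMod p) → ZMod p), sending f to the function a ↦ f(a), is a surjective ring homomorphism whose kernel is the ideal generated by the elements Xᵢ ^ p − Xᵢ for i : Fin n. Hence it induces a ring isomorphism MvPolynomial (Fin n) (ZMod p) ⧸ (X₁ ^ p − X₁, …, Xₙ ^ p − Xₙ) ≃+* ((Fin n → ZMod p) → ZMod p). -/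
/-!
Modulo the ideal generated by the `Xᵢ ^ q - Xᵢ`, every exponent can be lowered below `q`,
since `X ^ q ≡ X`; so each polynomial is congruent to one of degree `< q` in every variable.
Over `𝔽_q` these equations hold at every point, so they lie in the kernel of evaluation, and a
polynomial of degree `< q` in each variable vanishing on all of `𝔽_qⁿ` is zero. Hence the kernel
is exactly that ideal; surjectivity comes from the indicator polynomials of the points.
-/

open MvPolynomial

universe u

namespace MvPolynomial

noncomputable def fieldEquationsIdeal (σ R : Type*) [CommRing R] (q : ℕ) :
    Ideal (MvPolynomial σ R) :=
  Ideal.span (Set.range fun i => X i ^ q - X i)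

section Reduction

variable {σ R : Type*} [CommRing R] {q : ℕ}

theorem mk_X_pow_eq_mk_X (i : σ) :
    Ideal.Quotient.mk (fieldEquationsIdeal σ R q) (X i ^ q) =
      Ideal.Quotient.mk (fieldEquationsIdeal σ R q) (X i) :=
  Ideal.Quotient.eq.mpr (Ideal.subset_span ⟨i, rfl⟩)

/-- The bound `m ≤ k` keeps zero exponents zero, so that reduced exponents form a finsupp. -/
theorem exists_le_min_mk_X_pow_eq (hq : 1 < q) (i : σ) (k : ℕ) :
    ∃ m ≤ min k (q - 1), Ideal.Quotient.mk (fieldEquationsIdeal σ R q) (X i ^ k) =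
      Ideal.Quotient.mk (fieldEquationsIdeal σ R q) (X i ^ m) := by
  induction k with
  | zero => exact ⟨0, Nat.zero_le _, rfl⟩
  | succ k ih =>
    obtain ⟨m, hm, hkm⟩ := ih
    have hsucc : Ideal.Quotient.mk (fieldEquationsIdeal σ R q) (X i ^ (k + 1)) =
        Ideal.Quotient.mk (fieldEquationsIdeal σ R q) (X i ^ (m + 1)) := by
      rw [pow_succ, pow_succ, map_mul, map_mul, hkm]
    rcases Nat.lt_or_ge m (q - 1) with hlt | hge
    · exact ⟨m + 1, by omega, hsucc⟩
    · refine ⟨1, by omega, ?_⟩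
      rw [hsucc, show m + 1 = q by omega, mk_X_pow_eq_mk_X, pow_one]

theorem exists_mem_restrictDegree_mk_eq (hq : 1 < q) (f : MvPolynomial σ R) :
    ∃ g ∈ restrictDegree σ R (q - 1),
      Ideal.Quotient.mk (fieldEquationsIdeal σ R q) g =
        Ideal.Quotient.mk (fieldEquationsIdeal σ R q) f := by
  induction f using MvPolynomial.induction_on' with
  | add f₁ f₂ h₁ h₂ =>
    obtain ⟨g₁, hg₁, he₁⟩ := h₁
    obtain ⟨g₂, hg₂, he₂⟩ := h₂
    exact ⟨g₁ + g₂, add_mem hg₁ hg₂, by rw [map_add, map_add, he₁, he₂]⟩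
  | monomial s c =>
    choose m hm hsm using fun i => exists_le_min_mk_X_pow_eq (R := R) hq i (s i)
    have hm0 : ∀ i, m i ≠ 0 → i ∈ s.support := fun i hi =>
      Finsupp.mem_support_iff.mpr fun hs => hi (by have := hm i; omega)
    let t : σ →₀ ℕ := Finsupp.onFinset s.support (fun i => m i) hm0
    refine ⟨monomial t c, ?_, ?_⟩
    · rw [mem_restrictDegree]
      intro u hu i
      rw [Finset.mem_singleton.mp (support_monomial_subset hu)]
      exact (hm i).trans (min_le_right _ _)
    · rw [monomial_eq, monomial_eq, Finsupp.onFinset_prod _ (fun i => pow_zero _), Finsupp.prod,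
        map_mul, map_mul, map_prod, map_prod]
      exact congrArg _ (Finset.prod_congr rfl fun i _ => (hsm i).symm)

end Reduction

section FiniteField

variable (σ K : Type*) [Field K] [Fintype K]

theorem pi_eval_surjective [Finite σ] :
    Function.Surjective (RingHom.pi fun a : σ → K => (eval a : MvPolynomial σ K →+* K)) := by
  intro e
  obtain ⟨f, -, hf⟩ := Submodule.mem_map.mp ((map_restrict_dom_evalₗ K σ).ge (Set.mem_univ e))
  exact ⟨f, hf⟩

theorem fieldEquationsIdeal_le_ker_pi_eval :
    fieldEquationsIdeal σ K (Fintype.card K) ≤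
      RingHom.ker (RingHom.pi fun a : σ → K => (eval a : MvPolynomial σ K →+* K)) := by
  rw [fieldEquationsIdeal, Ideal.span_le]
  rintro _ ⟨i, rfl⟩
  ext a
  simp [FiniteField.pow_card]

end FiniteField

-- Mathlib's `eq_zero_of_eval_eq_zero` puts `σ` and `K` in the same universe.
theorem ker_pi_eval (σ K : Type u) [Field K] [Fintype K] [Finite σ] :
    RingHom.ker (RingHom.pi fun a : σ → K => (eval a : MvPolynomial σ K →+* K)) =
      fieldEquationsIdeal σ K (Fintype.card K) := by
  refine le_antisymm (fun f hf => ?_) (fieldEquationsIdeal_le_ker_pi_eval σ K)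
  obtain ⟨g, hg, hgf⟩ := exists_mem_restrictDegree_mk_eq (Fintype.one_lt_card (α := K)) f
  have hfg : f - g ∈ fieldEquationsIdeal σ K (Fintype.card K) := Ideal.Quotient.eq.mp hgf.symm
  have hg_ker : f - (f - g) ∈ RingHom.ker (RingHom.pi fun a : σ → K => (eval a :
      MvPolynomial σ K →+* K)) :=
    Ideal.sub_mem _ hf (fieldEquationsIdeal_le_ker_pi_eval σ K hfg)
  rw [sub_sub_cancel] at hg_ker
  have hg0 : g = 0 := eq_zero_of_eval_eq_zero σ K g (fun a => congrFun hg_ker a) hg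
  simpa [hg0] using hfg

end MvPolynomial

/-- For a prime `p` and `n : ℕ`, evaluation
`MvPolynomial (Fin n) (ZMod p) →+* ((Fin n → ZMod p) → ZMod p)` is surjective with kernel
the ideal generated by the `Xᵢ ^ p - Xᵢ`, so it induces a ring isomorphism
`(ZMod p)[x₁,…,xₙ] ⧸ (xᵢ^p - xᵢ) ≃+* ((Fin n → ZMod p) → ZMod p)`. -/
theorem mvPolynomial_eval_surjective_ker (p : ℕ) (hp : p.Prime) (n : ℕ) :
    Function.Surjective
      (Pi.ringHom fun a : Fin n → ZMod p => (MvPolynomial.eval a :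
        MvPolynomial (Fin n) (ZMod p) →+* ZMod p)) ∧
    RingHom.ker (Pi.ringHom fun a : Fin n → ZMod p => (MvPolynomial.eval a :
        MvPolynomial (Fin n) (ZMod p) →+* ZMod p)) =
      Ideal.span (Set.range fun i : Fin n =>
        (X i : MvPolynomial (Fin n) (ZMod p)) ^ p - X i) ∧
    Nonempty ((MvPolynomial (Fin n) (ZMod p) ⧸ Ideal.span (Set.range fun i : Fin n =>
        (X i : MvPolynomial (Fin n) (ZMod p)) ^ p - X i)) ≃+*
      ((Fin n → ZMod p) → ZMod p)) := by
  have : Fact p.Prime := ⟨hp⟩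
  have hsurj := pi_eval_surjective (Fin n) (ZMod p)
  have hker := ker_pi_eval (Fin n) (ZMod p)
  rw [ZMod.card] at hker
  exact ⟨hsurj, hker,
    ⟨(Ideal.quotEquivOfEq hker.symm).trans (RingHom.quotientKerEquivOfSurjective hsurj)⟩⟩
end

section
/- Let S be a nonempty finite type. The functor Hom_BoolRing((S → Bool), −) : BoolRing ⥤ Type (the coyoneda functor at the Boolean ring of Bool-valued functions on S) preserves colimits of shape J for every small filtered category J. -/
/-!
A finite ring is a finitely presented `ℤ`-algebra, and finitely presented algebras are compact
in the category of commutative rings (`CommRingCat.preservesFilteredColimits_coyoneda`, read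
through `Under ℤ ≌ CommRingCat`). Boolean rings form a full subcategory of commutative rings
closed under filtered colimits: every element of a filtered colimit comes from some stage, so it
is idempotent. By full faithfulness, `Hom(S → Bool, -)` on Boolean rings is the forgetful functor
followed by `Hom(S → Bool, -)` on commutative rings, and both preserve filtered colimits.
-/

open CategoryTheory CategoryTheory.Limits

/-- Functions into a Boolean ring form a Boolean ring under pointwise operations. -/
instance Pi.instBooleanRing {ι : Type*} (α : ι → Type*) [∀ i, BooleanRing (α i)] :
    BooleanRing (∀ i, α i) :=
  { (inferInstance : Ring (∀ i, α i)) with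
    isIdempotentElem := fun a => funext fun i => BooleanRing.mul_self (a i) }

universe v u u₁ u₂

namespace CategoryTheory.Functor.FullyFaithful

variable {C : Type u₁} [Category.{v} C] {D : Type u₂} [Category.{v} D] {F : C ⥤ D}

def coyonedaObjIso (hF : F.FullyFaithful) (X : C) :
    coyoneda.obj (Opposite.op X) ≅ F ⋙ coyoneda.obj (Opposite.op (F.obj X)) :=
  NatIso.ofComponents (fun _ => hF.homEquiv.toIso) fun _ => by ext; simp

lemma preservesFilteredColimits_coyoneda_obj (hF : F.FullyFaithful) (X : C)
    [PreservesFilteredColimits F]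
    [PreservesFilteredColimits (coyoneda.obj (Opposite.op (F.obj X)))] :
    PreservesFilteredColimits (coyoneda.obj (Opposite.op X)) :=
  ⟨fun _ _ _ => preservesColimitsOfShape_of_natIso (hF.coyonedaObjIso X).symm⟩

end CategoryTheory.Functor.FullyFaithful

lemma Algebra.FinitePresentation.preservesFilteredColimits_coyoneda (A : CommRingCat.{0})
    [Algebra.FinitePresentation ℤ A] :
    PreservesFilteredColimits (coyoneda.obj (Opposite.op A)) := by
  let e := Under.equivalenceOfIsInitial CommRingCat.zIsInitial
  have hA : (Int.castRingHom A).FinitePresentation := by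
    rwa [← algebraMap_int_eq, RingHom.finitePresentation_algebraMap]
  have : PreservesFilteredColimits (coyoneda.obj (Opposite.op (e.inverse.obj A))) :=
    CommRingCat.preservesFilteredColimits_coyoneda _ (e.inverse.obj A)
      (RingHom.ext_int (Int.castRingHom A) (e.inverse.obj A).hom.hom ▸ hA)
  exact e.fullyFaithfulInverse.preservesFilteredColimits_coyoneda_obj A

lemma CommRingCat.isIdempotentElem_colimit {J : Type u} [SmallCategory J] [IsFiltered J]
    (F : J ⥤ CommRingCat.{u}) (hF : ∀ j (x : F.obj j), IsIdempotentElem x)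
    (x : ↑(colimit F)) : IsIdempotentElem x := by
  obtain ⟨j, y, rfl⟩ := Concrete.colimit_exists_rep F x
  exact (hF j y).map (colimit.ι F j).hom

namespace BoolRing

def fullyFaithfulForget₂CommRingCat : (forget₂ BoolRing.{u} CommRingCat).FullyFaithful where
  preimage f := ConcreteCategory.ofHom f.hom

instance : (forget₂ BoolRing.{u} CommRingCat).Full := fullyFaithfulForget₂CommRingCat.full

instance : (forget₂ BoolRing.{u} CommRingCat).Faithful := fullyFaithfulForget₂CommRingCat.faithful

section FilteredColimits

variable {J : Type u} [SmallCategory J] [IsFiltered J] (K : J ⥤ BoolRing.{u})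

noncomputable instance : BooleanRing ↑(colimit (K ⋙ forget₂ BoolRing CommRingCat)) where
  isIdempotentElem :=
    CommRingCat.isIdempotentElem_colimit _ fun j => BooleanRing.isIdempotentElem (α := K.obj j)

noncomputable instance : CreatesColimit K (forget₂ BoolRing CommRingCat) :=
  createsColimitOfFullyFaithfulOfIso (of ↑(colimit (K ⋙ forget₂ BoolRing CommRingCat)))
    (Iso.refl _)

end FilteredColimits

instance : PreservesFilteredColimits (forget₂ BoolRing.{u} CommRingCat) :=
  ⟨fun _ _ _ => ⟨inferInstance⟩⟩

lemma preservesFilteredColimits_coyoneda_of_finite (X : BoolRing.{0}) [Finite X] :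
    PreservesFilteredColimits (coyoneda.obj (Opposite.op X)) :=
  have : Algebra.FinitePresentation ℤ X := Algebra.FinitePresentation.of_finiteType.mp inferInstance
  have := Algebra.FinitePresentation.preservesFilteredColimits_coyoneda
    ((forget₂ BoolRing CommRingCat).obj X)
  fullyFaithfulForget₂CommRingCat.preservesFilteredColimits_coyoneda_obj X

end BoolRing

theorem coyoneda_boolRing_preserves_filtered_colimits_general
    (S : Type) [Finite S] (J : Type) [SmallCategory J] [IsFiltered J] :
    PreservesColimitsOfShape J
      (coyoneda.obj (Opposite.op (BoolRing.of (S → Bool)))) := by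
  have := BoolRing.preservesFilteredColimits_coyoneda_of_finite (.of (S → Bool))
  infer_instance

/-- For a nonempty finite type `S`, the coyoneda functor at the Boolean ring `S → Bool`
preserves filtered colimits. -/
theorem coyoneda_boolRing_preserves_filtered_colimits
    (S : Type) [Finite S] [Nonempty S] (J : Type) [SmallCategory J] [IsFiltered J] :
    PreservesColimitsOfShape J
      (coyoneda.obj (Opposite.op (BoolRing.of (S → Bool)))) :=
  coyoneda_boolRing_preserves_filtered_colimits_general S J
end

section
/- Let S be a nonempty finite type and let J be any small sifted category. The functor Hom_BoolRing((S → Bool), −) : BoolRing ⥤ Type preserves colimits of shape J. That is, (S → Bool) is a compact 1-projective object of the category of Boolean rings. -/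
open CategoryTheory CategoryTheory.Limits

/-!
Sifted colimits of sets commute with finite products. Two consequences: a sifted colimit of
Boolean rings is computed on underlying sets (any two or three elements of the colimit come
from a common stage, where the ring axioms already hold), and `Hom(F, -)` preserves sifted
colimits when `F = (ι → Bool) → Bool` is the free Boolean ring on a finite set `ι`, since
`Hom(F, R) ≃ (ι → R)`. For nonempty `S`, the map `S → (S → Bool)`, `s ↦ Pi.single s 1`, has a
left inverse, so precomposition exhibits `S → Bool` as a retract of the free Boolean ring on
`S`, and colimit preservation passes to retracts.
-/

open MonoidalCategory Opposite

theorem preservesColimitsOfShape_of_retract {C D J : Type*} [Category C] [Category D]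
    [Category J] {F G : C ⥤ D} (h : Retract G F) [PreservesColimitsOfShape J F] :
    PreservesColimitsOfShape J G where
  preservesColimit {K} := ⟨fun {c} hc => ⟨by
    let hF := isColimitOfPreserves F hc
    have hir (X : C) : h.i.app X ≫ h.r.app X = 𝟙 (G.obj X) := NatTrans.congr_app h.retract X
    let lift (s : Cocone (K ⋙ G)) := (Cocone.precompose (Functor.whiskerLeft K h.r)).obj s
    refine
      { desc := fun s => h.i.app c.pt ≫ hF.desc (lift s)
        fac := fun s j => ?_
        uniq := fun s m hm => ?_ }
    · have := hF.fac (lift s) j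
      simp only [Functor.mapCocone_ι_app, Functor.comp_obj] at this ⊢
      rw [h.i.naturality_assoc, this]
      simp [lift, reassoc_of% hir]
    · have hr : h.r.app c.pt ≫ m = hF.desc (lift s) := hF.uniq (lift s) _ fun j => by
        simp [lift, ← hm j]
      rw [← hr, reassoc_of% hir]⟩⟩

namespace CategoryTheory.Limits.Types

variable {J : Type} [SmallCategory J] [IsSifted J]

instance preservesColimitsOfShape_tensor {C : Type*} [Category C] (F G : C ⥤ Type)
    [PreservesColimitsOfShape J F] [PreservesColimitsOfShape J G] :
    PreservesColimitsOfShape J (F ⊗ G) where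
  preservesColimit := ⟨fun hc => ⟨(isColimitOfPreserves F hc).tensor (isColimitOfPreserves G hc)⟩⟩

def coyonedaOptionIso (ι : Type) : 𝟭 Type ⊗ coyoneda.obj (op ι) ≅ coyoneda.obj (op (Option ι)) :=
  NatIso.ofComponents (fun X => Equiv.toIso
    ((Equiv.prodCongr (Equiv.refl X) TypeCat.homEquiv).trans
      (Equiv.piOptionEquivProd.symm.trans TypeCat.homEquiv.symm))) fun f => by
    ext ⟨x, g⟩
    exact TypeCat.homEquiv.injective (funext fun o => by cases o <;> rfl)

theorem preservesColimitsOfShape_coyoneda_of_finite (ι : Type) [Finite ι] :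
    PreservesColimitsOfShape J (coyoneda.obj (op ι)) := by
  induction ι using Finite.induction_empty_option with
  | of_equiv e _ =>
    exact preservesColimitsOfShape_of_natIso (coyoneda.mapIso (Equiv.toIso e.symm).op)
  | h_empty =>
    have : PreservesColimitsOfShape J ((Functor.const Type).obj PUnit.{1}) :=
      ⟨⟨fun _ => ⟨isColimitPUnitCocone J⟩⟩⟩
    exact preservesColimitsOfShape_of_natIso <|
      NatIso.ofComponents (F := (Functor.const Type).obj PUnit.{1}) (fun X =>
        Equiv.toIso ((Equiv.ofUnique (PEmpty → X) PUnit).symm.trans TypeCat.homEquiv.symm))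
        fun f => by ext; exact TypeCat.homEquiv.injective (Subsingleton.elim _ _)
  | h_option _ => exact preservesColimitsOfShape_of_natIso (coyonedaOptionIso _)

theorem jointly_surjective₂ {K L : J ⥤ Type} {c : Cocone K} {d : Cocone L}
    (hc : IsColimit c) (hd : IsColimit d) (a : c.pt) (b : d.pt) :
    ∃ j x y, c.ι.app j x = a ∧ d.ι.app j y = b := by
  obtain ⟨j, ⟨x, y⟩, h⟩ := jointly_surjective _ (hc.tensor hd) (a, b)
  obtain ⟨hx, hy⟩ := Prod.mk.inj h
  exact ⟨j, x, y, hx, hy⟩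

noncomputable def colimitMap₂ {K : J ⥤ Type} (μ : K ⊗ K ⟶ K) :
    colimit K → colimit K → colimit K :=
  fun a b => ((colimit.isColimit K).tensor (colimit.isColimit K)).map (colimit.cocone K) μ (a, b)

theorem colimitMap₂_ι {K : J ⥤ Type} (μ : K ⊗ K ⟶ K) (j : J) (x y : K.obj j) :
    colimitMap₂ μ (colimit.ι K j x) (colimit.ι K j y) = colimit.ι K j (μ.app j (x, y)) :=
  types_congr_hom
    (((colimit.isColimit K).tensor (colimit.isColimit K)).ι_map (colimit.cocone K) μ j) (x, y)

end CategoryTheory.Limits.Types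

namespace BoolRing

variable {J : Type} [SmallCategory J] (D : J ⥤ BoolRing.{0})

def binOpNatTrans (op : ∀ R : BoolRing.{0}, R → R → R)
    (hop : ∀ {R S : BoolRing.{0}} (f : R ⟶ S) (x y : R), f (op R x y) = op S (f x) (f y)) :
    (D ⋙ forget BoolRing) ⊗ (D ⋙ forget BoolRing) ⟶ D ⋙ forget BoolRing where
  app j := ↾fun p => op (D.obj j) p.1 p.2
  naturality _ _ f := by ext p; exact (hop (D.map f) p.1 p.2).symm

def SiftedColimit : Type := colimit (D ⋙ forget BoolRing)

variable {D}

noncomputable def SiftedColimit.ι (j : J) : D.obj j → SiftedColimit D :=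
  colimit.ι (D ⋙ forget BoolRing) j

namespace SiftedColimit

theorem ι_map {j j' : J} (f : j ⟶ j') (x : D.obj j) : ι j' (D.map f x) = ι j x :=
  colimit.w_apply (D ⋙ forget BoolRing) f x

theorem ι_jointly_surjective (a : SiftedColimit D) : ∃ j x, ι j x = a :=
  Types.jointly_surjective_of_isColimit (colimit.isColimit _) a

theorem ι_eq_ι_of_natural [IsPreconnected J] (e : ∀ R : BoolRing.{0}, R)
    (he : ∀ {R S : BoolRing.{0}} (f : R ⟶ S), f (e R) = e S) (j j' : J) :
    ι j (e (D.obj j)) = ι j' (e (D.obj j')) :=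
  constant_of_preserves_morphisms (fun j => ι j (e (D.obj j)))
    (fun _ _ f => by simp only [← ι_map f, he]) j j'

variable [IsSifted J]

theorem exists_ι_eq₂ (a b : SiftedColimit D) : ∃ j x y, ι j x = a ∧ ι j y = b :=
  Types.jointly_surjective₂ (colimit.isColimit _) (colimit.isColimit _) a b

theorem exists_ι_eq₃ (a b c : SiftedColimit D) :
    ∃ j x y z, ι j x = a ∧ ι j y = b ∧ ι j z = c := by
  obtain ⟨j, x, ⟨y, z⟩, rfl, h⟩ := Types.jointly_surjective₂ (colimit.isColimit _)
    ((colimit.isColimit _).tensor (colimit.isColimit _)) a (b, c)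
  obtain ⟨hy, hz⟩ := Prod.mk.inj h
  exact ⟨j, x, y, z, rfl, hy, hz⟩

open IsSifted in
noncomputable instance : Zero (SiftedColimit D) := ⟨ι (Classical.arbitrary J) 0⟩

open IsSifted in
noncomputable instance : One (SiftedColimit D) := ⟨ι (Classical.arbitrary J) 1⟩

noncomputable instance : Add (SiftedColimit D) :=
  ⟨Types.colimitMap₂ (binOpNatTrans D (fun _ x y => x + y) fun f => map_add f.hom)⟩

noncomputable instance : Mul (SiftedColimit D) :=
  ⟨Types.colimitMap₂ (binOpNatTrans D (fun _ x y => x * y) fun f => map_mul f.hom)⟩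

instance : Neg (SiftedColimit D) := ⟨id⟩

theorem ι_zero (j : J) : ι j (0 : D.obj j) = 0 :=
  ι_eq_ι_of_natural (fun _ => 0) (fun f => map_zero f.hom) _ _

theorem ι_one (j : J) : ι j (1 : D.obj j) = 1 :=
  ι_eq_ι_of_natural (fun _ => 1) (fun f => map_one f.hom) _ _

theorem ι_add (j : J) (x y : D.obj j) : ι j (x + y) = ι j x + ι j y :=
  (Types.colimitMap₂_ι (binOpNatTrans D (fun _ x y => x + y) fun f => map_add f.hom) j x y).symm

theorem ι_mul (j : J) (x y : D.obj j) : ι j (x * y) = ι j x * ι j y :=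
  (Types.colimitMap₂_ι (binOpNatTrans D (fun _ x y => x * y) fun f => map_mul f.hom) j x y).symm

noncomputable instance : BooleanRing (SiftedColimit D) where
  add_assoc a b c := by
    obtain ⟨j, x, y, z, rfl, rfl, rfl⟩ := exists_ι_eq₃ a b c
    simp only [← ι_add, add_assoc]
  zero_add a := by
    obtain ⟨j, x, rfl⟩ := ι_jointly_surjective a
    rw [← ι_zero j, ← ι_add, zero_add]
  add_zero a := by
    obtain ⟨j, x, rfl⟩ := ι_jointly_surjective a
    rw [← ι_zero j, ← ι_add, add_zero]
  add_comm a b := by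
    obtain ⟨j, x, y, rfl, rfl⟩ := exists_ι_eq₂ a b
    rw [← ι_add, ← ι_add, add_comm]
  neg_add_cancel a := by
    obtain ⟨j, x, rfl⟩ := ι_jointly_surjective a
    exact (ι_add j x x).symm.trans (by rw [BooleanRing.add_self, ι_zero])
  nsmul := nsmulRec
  zsmul := zsmulRec
  mul_assoc a b c := by
    obtain ⟨j, x, y, z, rfl, rfl, rfl⟩ := exists_ι_eq₃ a b c
    simp only [← ι_mul, mul_assoc]
  one_mul a := by
    obtain ⟨j, x, rfl⟩ := ι_jointly_surjective a
    rw [← ι_one j, ← ι_mul, one_mul]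
  mul_one a := by
    obtain ⟨j, x, rfl⟩ := ι_jointly_surjective a
    rw [← ι_one j, ← ι_mul, mul_one]
  zero_mul a := by
    obtain ⟨j, x, rfl⟩ := ι_jointly_surjective a
    rw [← ι_zero j, ← ι_mul, zero_mul]
  mul_zero a := by
    obtain ⟨j, x, rfl⟩ := ι_jointly_surjective a
    rw [← ι_zero j, ← ι_mul, mul_zero]
  left_distrib a b c := by
    obtain ⟨j, x, y, z, rfl, rfl, rfl⟩ := exists_ι_eq₃ a b c
    simp only [← ι_add, ← ι_mul, mul_add]
  right_distrib a b c := by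
    obtain ⟨j, x, y, z, rfl, rfl, rfl⟩ := exists_ι_eq₃ a b c
    simp only [← ι_add, ← ι_mul, add_mul]
  isIdempotentElem a := by
    obtain ⟨j, x, rfl⟩ := ι_jointly_surjective a
    rw [IsIdempotentElem, ← ι_mul, BooleanRing.mul_self]

noncomputable def ιHom (j : J) : D.obj j →+* SiftedColimit D where
  toFun := ι j
  map_one' := ι_one j
  map_mul' := ι_mul j
  map_zero' := ι_zero j
  map_add' := ι_add j

end SiftedColimit

open SiftedColimit

variable [IsSifted J]

variable (D) in
noncomputable def siftedColimitCocone : Cocone D where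
  pt := of (SiftedColimit D)
  ι.app j := ofHom (ιHom j)
  ι.naturality _ _ f := by ext x; exact ι_map f x

noncomputable def siftedColimitDesc (s : Cocone D) : SiftedColimit D →+* s.pt :=
  have desc_ι (j : J) (x : D.obj j) :
      colimit.desc (D ⋙ forget BoolRing) ((forget BoolRing).mapCocone s) (ι j x) = s.ι.app j x :=
    colimit.ι_desc_apply ((forget BoolRing).mapCocone s) j x
  { toFun := colimit.desc (D ⋙ forget BoolRing) ((forget BoolRing).mapCocone s)
    map_one' := by rw [← ι_one (Classical.arbitrary J), desc_ι, map_one]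
    map_zero' := by rw [← ι_zero (Classical.arbitrary J), desc_ι, map_zero]
    map_add' a b := by
      obtain ⟨j, x, y, rfl, rfl⟩ := exists_ι_eq₂ a b
      rw [← ι_add, desc_ι, desc_ι, desc_ι, map_add]
    map_mul' a b := by
      obtain ⟨j, x, y, rfl, rfl⟩ := exists_ι_eq₂ a b
      rw [← ι_mul, desc_ι, desc_ι, desc_ι, map_mul] }

variable (D) in
noncomputable def isColimitSiftedColimitCocone : IsColimit (siftedColimitCocone D) where
  desc s := ofHom (siftedColimitDesc s)
  fac s j := by ext x; exact colimit.ι_desc_apply ((forget BoolRing).mapCocone s) j x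
  uniq s m hm := by
    ext a
    obtain ⟨j, x, rfl⟩ := ι_jointly_surjective a
    exact (congrArg (· x) (congrArg Hom.hom (hm j))).trans
      (colimit.ι_desc_apply ((forget BoolRing).mapCocone s) j x).symm

instance : PreservesColimitsOfShape J (forget BoolRing.{0}) where
  preservesColimit {D} :=
    preservesColimit_of_preserves_colimit_cocone (isColimitSiftedColimitCocone D)
      (colimit.isColimit (D ⋙ forget BoolRing))

end BoolRing

namespace BooleanRing

variable {X ι R : Type*} [BooleanRing R]

def piBoolHom [Fintype X] {e : X → R} (he : CompleteOrthogonalIdempotents e) :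
    (X → Bool) →+* R where
  toFun f := ∑ x, if f x then e x else 0
  map_one' := by simpa [Bool.one_eq_true] using he.complete
  map_zero' := by simp [Bool.zero_eq_false]
  map_add' f g := by
    rw [← Finset.sum_add_distrib]
    refine Finset.sum_congr rfl fun x _ => ?_
    rw [Pi.add_apply]
    cases f x <;> cases g x <;> simp [Bool.add_eq_xor, BooleanRing.add_self]
  map_mul' f g := by
    rw [Finset.sum_mul_sum]
    refine Finset.sum_congr rfl fun x _ => ?_
    rw [Finset.sum_eq_single x (fun y _ hyx => ?_) (by simp)]
    · rw [Pi.mul_apply]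
      cases f x <;> cases g x <;> simp [Bool.mul_eq_and]
    · split_ifs <;> simp [he.ortho hyx.symm]

theorem piBoolHom_apply [Fintype X] {e : X → R} (he : CompleteOrthogonalIdempotents e)
    (f : X → Bool) : piBoolHom he f = ∑ x, if f x then e x else 0 := rfl

variable [Fintype ι]

-- The image of the indicator of `x` under the ring map sending the `i`-th coordinate to `r i`.
def atom (r : ι → R) (x : ι → Bool) : R := ∏ i, if x i then r i else 1 + r i

theorem atom_mul_of_ne (r : ι → R) {x y : ι → Bool} (h : x ≠ y) : atom r x * atom r y = 0 := by
  obtain ⟨i, hi⟩ := Function.ne_iff.mp h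
  rw [atom, atom, ← Finset.prod_mul_distrib]
  refine Finset.prod_eq_zero (Finset.mem_univ i) ?_
  cases hx : x i <;> cases hy : y i <;> simp_all [BooleanRing.mul_one_add_self, mul_comm (1 + r i)]

theorem map_atom {S : Type*} [BooleanRing S] (φ : R →+* S) (r : ι → R) (x : ι → Bool) :
    φ (atom r x) = atom (φ ∘ r) x := by
  simp [atom, map_prod, apply_ite φ]

theorem atom_coord (x : ι → Bool) : atom (fun i (y : ι → Bool) => y i) x = Pi.single x 1 := by
  funext y
  simp only [atom, Finset.prod_apply, apply_ite (fun g : (ι → Bool) → Bool => g y), Pi.add_apply,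
    Pi.one_apply]
  by_cases h : y = x
  · subst h
    refine (Finset.prod_eq_one fun i _ => ?_).trans (by simp)
    cases y i <;> rfl
  · obtain ⟨i, hi⟩ := Function.ne_iff.mp h
    refine (Finset.prod_eq_zero (Finset.mem_univ i) ?_).trans (by simp [h])
    cases hx : x i <;> cases hy : y i <;>
      simp_all [Bool.one_eq_true, Bool.zero_eq_false]

variable [DecidableEq ι]

theorem atom_mul (r : ι → R) (x : ι → Bool) (i : ι) :
    atom r x * r i = if x i then atom r x else 0 := by
  rw [atom, ← Finset.prod_erase_mul _ _ (Finset.mem_univ i), mul_assoc]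
  cases x i <;> simp [add_mul, BooleanRing.add_self]

theorem sum_atom (r : ι → R) : ∑ x, atom r x = 1 :=
  calc ∑ x, atom r x = ∏ i, ∑ b : Bool, if b then r i else 1 + r i := by
        rw [Fintype.prod_sum]; rfl
    _ = 1 := Finset.prod_eq_one fun i _ => by simp [add_left_comm (r i) 1, BooleanRing.add_self]

theorem completeOrthogonalIdempotents_atom (r : ι → R) :
    CompleteOrthogonalIdempotents (atom r) :=
  ⟨⟨fun _ => BooleanRing.isIdempotentElem _, fun _ _ h => atom_mul_of_ne r h⟩, sum_atom r⟩

def freeLift (r : ι → R) : ((ι → Bool) → Bool) →+* R :=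
  piBoolHom (completeOrthogonalIdempotents_atom r)

theorem freeLift_coord (r : ι → R) (i : ι) : freeLift r (fun y => y i) = r i := by
  simp only [freeLift, piBoolHom_apply, ← atom_mul, ← Finset.sum_mul, sum_atom, one_mul]

theorem freeLift_comp_coord (φ : ((ι → Bool) → Bool) →+* R) :
    freeLift (fun i => φ (fun y => y i)) = φ := by
  refine RingHom.ext fun f => ?_
  have hf : f = ∑ x, if f x then atom (fun i (y : ι → Bool) => y i) x else 0 := by
    simp_rw [atom_coord]
    conv_lhs => rw [← Finset.univ_sum_single f]
    refine Finset.sum_congr rfl fun x _ => ?_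
    cases f x <;> simp [Bool.zero_eq_false, Bool.one_eq_true]
  conv_rhs => rw [hf]
  simp only [freeLift, piBoolHom_apply, map_sum, apply_ite φ, map_zero, map_atom]
  rfl

def freeLiftEquiv : (((ι → Bool) → Bool) →+* R) ≃ (ι → R) where
  toFun φ i := φ (fun y => y i)
  invFun := freeLift
  left_inv := freeLift_comp_coord
  right_inv r := funext (freeLift_coord r)

end BooleanRing

namespace BoolRing

def coyonedaFreeIso (ι : Type) [Fintype ι] [DecidableEq ι] :
    coyoneda.obj (op (of ((ι → Bool) → Bool))) ≅ forget BoolRing ⋙ coyoneda.obj (op ι) :=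
  NatIso.ofComponents fun R => Equiv.toIso
    (ConcreteCategory.homEquiv.trans (BooleanRing.freeLiftEquiv.trans TypeCat.homEquiv.symm))

theorem preservesColimitsOfShape_coyoneda_free {J : Type} [SmallCategory J] [IsSifted J]
    (ι : Type) [Fintype ι] [DecidableEq ι] :
    PreservesColimitsOfShape J (coyoneda.obj (op (of ((ι → Bool) → Bool)))) :=
  have := Types.preservesColimitsOfShape_coyoneda_of_finite (J := J) ι
  preservesColimitsOfShape_of_natIso (coyonedaFreeIso ι).symm

def precomp {α β : Type} (g : α → β) : of (β → Bool) ⟶ of (α → Bool) :=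
  ofHom (RingHom.pi fun a => Pi.evalRingHom _ (g a))

def retractOfLeftInverse {α β : Type} {ε : α → β} {ρ : β → α} (h : Function.LeftInverse ρ ε) :
    Retract (of (α → Bool)) (of (β → Bool)) where
  i := precomp ρ
  r := precomp ε
  retract := by ext f a; exact congrArg f (h a)

end BoolRing

/-- For a nonempty finite type `S`, the coyoneda functor at the Boolean ring `S → Bool`
preserves sifted colimits: `S → Bool` is a compact `1`-projective object of the
category of Boolean rings. -/
theorem coyoneda_boolRing_preserves_sifted_colimits
    (S : Type) [Finite S] [Nonempty S] (J : Type) [SmallCategory J] [IsSifted J] :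
    PreservesColimitsOfShape J
      (coyoneda.obj (Opposite.op (BoolRing.of (S → Bool)))) := by
  classical
  have := Fintype.ofFinite S
  have := BoolRing.preservesColimitsOfShape_coyoneda_free (J := J) S
  have hε : Function.Injective fun s : S => (Pi.single s 1 : S → Bool) :=
    fun s t h => by simpa [Pi.single_apply] using congrFun h s
  exact preservesColimitsOfShape_of_retract
    ((BoolRing.retractOfLeftInverse (Function.leftInverse_invFun hε)).op.map coyoneda)
end

section
/- Let X be a topological space and suppose the first projection pr₁ : X × X → X is a homotopy equivalence, i.e., there is a continuous map s : X → X × X with pr₁ ∘ s homotopic to the identity of X and s ∘ pr₁ homotopic to the identity of X × X. Then the set of path components of X is a subsingleton, and for every basepoint x : X and every natural number n, the homotopy group πₙ(X, x) is a subsingleton. In particular, X is empty or weakly contractible. -/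
open scoped unitInterval Topology Topology.Homotopy
open Set ContinuousMap

/-!
If `s ∘ pr₁ ≃ id`, then `s ≃ s ∘ pr₁ ∘ Δ ≃ Δ`, so `pr₁ ∘ s ≃ id ≃ pr₂ ∘ s` and
`pr₁ ≃ pr₁ ∘ s ∘ pr₁ ≃ pr₂ ∘ s ∘ pr₁ ≃ pr₂`. A homotopy `pr₁ ≃ pr₂` joins any two points and,
restricted to `X × {x}`, contracts `X` onto `x`.

A free contraction `K` onto `x` need not fix `x`, but its trace at `x` is a null-homotopic loop
since `X` is simply connected. To contract a generalized loop `f` rel boundary, first dilate the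
cube so that `f` becomes constant on the collar `1/2 ≤ radius`; then run `K` inside the collar,
and on the collar the null-homotopy of the trace, with the radius as its parameter.
-/

namespace Cube

variable {N : Type*}

def radius [Fintype N] (y : I^N) : ℝ := ‖fun j => 2 * (y j : ℝ) - 1‖

noncomputable def dilate (s : ℝ) (y : I^N) : I^N :=
  fun j => projIcc 0 1 zero_le_one (1 / 2 + s * ((y j : ℝ) - 1 / 2))

theorem continuous_radius [Fintype N] : Continuous (radius (N := N)) := by
  unfold radius; fun_prop

theorem radius_le_one [Fintype N] (y : I^N) : radius y ≤ 1 :=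
  (pi_norm_le_iff_of_nonneg zero_le_one).2 fun j => by
    rw [Real.norm_eq_abs, abs_le]
    constructor <;> linarith [(y j).2.1, (y j).2.2]

theorem radius_eq_one_of_mem_boundary [Fintype N] {y : I^N} (hy : y ∈ boundary N) :
    radius y = 1 := by
  obtain ⟨j, hj⟩ := hy
  refine (radius_le_one y).antisymm ?_
  calc (1 : ℝ) = ‖2 * (y j : ℝ) - 1‖ := by rcases hj with h | h <;> norm_num [h]
    _ ≤ radius y := norm_le_pi_norm (fun j => 2 * (y j : ℝ) - 1) j

theorem dilate_one (y : I^N) : dilate 1 y = y :=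
  funext fun j => by simp [dilate]

theorem continuous_dilate : Continuous fun p : ℝ × I^N => dilate p.1 p.2 := by
  unfold dilate; fun_prop

theorem dilate_mem_boundary [Fintype N] {s : ℝ} {y : I^N} (h : 1 ≤ s * radius y) :
    dilate s y ∈ boundary N := by
  by_contra hy
  simp only [boundary, Set.mem_ofPred_eq, not_exists, not_or] at hy
  have hlt : ‖s • fun j => 2 * (y j : ℝ) - 1‖ < 1 := by
    refine (pi_norm_lt_iff zero_lt_one).2 fun j => ?_
    have h0 : 0 < 1 / 2 + s * ((y j : ℝ) - 1 / 2) := by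
      by_contra! h0; exact (hy j).1 (projIcc_of_le_left _ h0)
    have h1 : 1 / 2 + s * ((y j : ℝ) - 1 / 2) < 1 := by
      by_contra! h1; exact (hy j).2 (projIcc_of_right_le _ h1)
    rw [Pi.smul_apply, smul_eq_mul, Real.norm_eq_abs, abs_lt]
    constructor <;> linarith
  rw [norm_smul, Real.norm_eq_abs] at hlt
  exact (h.trans (mul_le_mul_of_nonneg_right (le_abs_self s) (norm_nonneg _))).not_gt hlt

end Cube

namespace GenLoop

variable {X : Type*} [TopologicalSpace X] {N : Type*} [Fintype N] {x : X}

noncomputable def dilate (f : Ω^ N X x) : Ω^ N X x :=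
  ⟨f.1.comp ⟨Cube.dilate 2, Cube.continuous_dilate.comp (Continuous.prodMk_right 2)⟩,
    fun y hy => f.2 _ <| Cube.dilate_mem_boundary <| by
      rw [Cube.radius_eq_one_of_mem_boundary hy]; norm_num⟩

theorem dilate_apply_of_half_le_radius (f : Ω^ N X x) {y : I^N} (hy : 1 / 2 ≤ Cube.radius y) :
    dilate f y = x :=
  f.2 (Cube.dilate 2 y) (Cube.dilate_mem_boundary (by linarith))

theorem homotopic_dilate (f : Ω^ N X x) : Homotopic f (dilate f) :=
  ⟨{ toFun := fun p => f (Cube.dilate (1 + p.1) p.2)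
     continuous_toFun := by
       have := Cube.continuous_dilate (N := N)
       fun_prop
     map_zero_left := fun y => by simp [Cube.dilate_one]
     map_one_left := fun y => by
       show f _ = f (Cube.dilate 2 y)
       norm_num
     prop' := fun t y hy => by
       refine (f.2 _ (Cube.dilate_mem_boundary ?_)).trans (f.2 y hy).symm
       rw [Cube.radius_eq_one_of_mem_boundary hy]
       linarith [t.2.1] }⟩

theorem dilate_homotopic_const (K : Homotopy (ContinuousMap.id X) (ContinuousMap.const X x))
    (hK : (K.evalAt x).Homotopic (Path.refl x)) (f : Ω^ N X x) :
    Homotopic (dilate f) const := by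
  obtain ⟨P⟩ := hK
  have hf : ∀ y, 1 / 2 ≤ Cube.radius y → dilate f y = x :=
    fun _ => dilate_apply_of_half_le_radius f
  refine ⟨{ toFun := fun p => if Cube.radius p.2 ≤ 1 / 2 then K (p.1, dilate f p.2)
              else P (projIcc 0 1 zero_le_one (2 * Cube.radius p.2 - 1), p.1)
            continuous_toFun := ?_
            map_zero_left := fun y => ?_
            map_one_left := fun y => ?_
            prop' := fun t y hy => ?_ }⟩
  · have := Cube.continuous_radius (N := N)
    refine Continuous.if_le (by fun_prop) (by fun_prop) (by fun_prop) continuous_const ?_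
    intro p hp
    have h0 : projIcc (0 : ℝ) 1 zero_le_one (2 * Cube.radius p.2 - 1) = 0 := by norm_num [hp]
    rw [h0, P.apply_zero, hf p.2 hp.ge]
    rfl
  · show ite _ _ _ = _
    split_ifs with hy
    · simp
    · simp [hf y (not_le.1 hy).le, P.source]
  · show ite _ _ _ = _
    split_ifs <;> simp [P.target]
  · show ite _ _ _ = _
    have hr := Cube.radius_eq_one_of_mem_boundary hy
    norm_num [hr, hf y (by norm_num [hr])]

end GenLoop

section

variable {X : Type*} [TopologicalSpace X]

theorem HomotopyGroup.subsingleton_of_contractibleSpace [ContractibleSpace X] (N : Type*)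
    [Finite N] (x : X) : Subsingleton (HomotopyGroup N X x) := by
  have := Fintype.ofFinite N
  obtain ⟨c, hc⟩ := id_nullhomotopic X
  obtain ⟨K⟩ : (ContinuousMap.id X).Homotopic (ContinuousMap.const X x) :=
    hc.trans (homotopic_const_iff.2 (PathConnectedSpace.joined c x))
  have hK : (K.evalAt x).Homotopic (Path.refl x) := SimplyConnectedSpace.paths_homotopic _ _
  have hf (f : Ω^ N X x) : GenLoop.Homotopic f GenLoop.const :=
    (GenLoop.homotopic_dilate f).trans (GenLoop.dilate_homotopic_const K hK f)
  exact ⟨fun a b => Quotient.inductionOn₂ a b fun f g =>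
    Quotient.sound ((hf f).trans (hf g).symm)⟩

theorem ContinuousMap.homotopic_fst_snd_of_comp_fst_homotopic_id {s : C(X, X × X)}
    (h : (s.comp fst).Homotopic (ContinuousMap.id (X × X))) :
    (fst : C(X × X, X)).Homotopic snd := by
  have hs : s.Homotopic ((ContinuousMap.id X).prodMk (ContinuousMap.id X)) :=
    h.comp (.refl ((ContinuousMap.id X).prodMk (ContinuousMap.id X)))
  have hfs : (fst.comp s).Homotopic (snd.comp s) :=
    ((Homotopic.refl fst).comp hs).trans ((Homotopic.refl snd).comp hs).symm
  exact ((Homotopic.refl fst).comp h.symm).trans ((hfs.comp (.refl fst)).trans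
    ((Homotopic.refl snd).comp h))

theorem ContractibleSpace.of_homotopic_fst_snd (h : (fst : C(X × X, X)).Homotopic snd) (x : X) :
    ContractibleSpace X :=
  (contractible_iff_id_nullhomotopic X).2
    ⟨x, h.comp (.refl ((ContinuousMap.id X).prodMk (ContinuousMap.const X x)))⟩

end

/-- If the first projection `X × X → X` is a homotopy equivalence, then `X` has at most one
path component and all of its homotopy groups are trivial: `X` is empty or weakly
contractible. -/
theorem weakly_contractible_of_prod_proj_homotopy_equiv (X : Type*) [TopologicalSpace X]
    (h : ∃ s : C(X, X × X),
      (ContinuousMap.fst.comp s).Homotopic (ContinuousMap.id X) ∧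
      (s.comp ContinuousMap.fst).Homotopic (ContinuousMap.id (X × X))) :
    Subsingleton (ZerothHomotopy X) ∧
      ∀ (x : X) (n : ℕ), Subsingleton (HomotopyGroup (Fin n) X x) := by
  obtain ⟨s, -, hs⟩ := h
  have hfs := homotopic_fst_snd_of_comp_fst_homotopic_id hs
  refine ⟨⟨fun a b => ?_⟩, fun x n => ?_⟩
  · induction a with | mk a => induction b with | mk b =>
    exact ZerothHomotopy.sound (hfs.some.evalAt (a, b))
  · have := ContractibleSpace.of_homotopic_fst_snd hfs x
    exact HomotopyGroup.subsingleton_of_contractibleSpace _ x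
end

section
/- Let G be a topological group and m a natural number such that g ^ m = 1 for every g ∈ G. Then for every natural number n ≥ 1, every element α of the homotopy group πₙ(G, 1) based at the identity satisfies α ^ m = 1. -/
/-!
Pointwise multiplication of generalized loops in a topological monoid descends to `πₙ` and
satisfies the interchange law with concatenation along any coordinate, so by Eckmann–Hilton it
is the group law of `πₙ`. Hence `[f] ^ m` is the class of the pointwise power `f ^ m`, which is
the constant loop when `g ^ m = 1` for all `g`.
-/

open scoped unitInterval Topology Topology.Homotopy

namespace GenLoop

variable {N M : Type*} [TopologicalSpace M] [Monoid M] [ContinuousMul M]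

variable (N M) in
def submonoid : Submonoid C(I^N, M) where
  carrier := Ω^ N M 1
  mul_mem' hf hg y hy := by simp [hf y hy, hg y hy]
  one_mem' _ _ := rfl

instance : Monoid (Ω^ N M 1) := inferInstanceAs (Monoid (submonoid N M))

@[simp]
theorem mul_apply (f g : Ω^ N M 1) (y : I^N) : (f * g) y = f y * g y := rfl

theorem Homotopic.mul {f f' g g' : Ω^ N M 1} (hf : Homotopic f f') (hg : Homotopic g g') :
    Homotopic (f * g) (f' * g') := by
  obtain ⟨F⟩ := hf
  obtain ⟨G⟩ := hg
  exact ⟨{ toFun p := F p * G p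
           map_zero_left y := by simp
           map_one_left y := by simp
           prop' t y hy := by simp [F.eq_fst t hy, G.eq_fst t hy] }⟩

theorem transAt_mul_transAt [DecidableEq N] (i : N) (a b c d : Ω^ N M 1) :
    transAt i a b * transAt i c d = transAt i (a * c) (b * d) := by
  ext y
  simp only [mul_apply, transAt, coe_copy]
  split_ifs <;> rfl

end GenLoop

namespace HomotopyGroup

open GenLoop

variable {N X : Type*} [TopologicalSpace X] {x : X}

abbrev mk (f : Ω^ N X x) : HomotopyGroup N X x := ⟦f⟧

theorem mk_mul_mk [DecidableEq N] [Nonempty N] (i : N) (f g : Ω^ N X x) :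
    mk f * mk g = mk (transAt i g f) :=
  mul_spec

variable [DecidableEq N] [Nonempty N] {M : Type*} [TopologicalSpace M] [Monoid M]
  [ContinuousMul M]

theorem mk_mul (f g : Ω^ N M 1) : mk (f * g) = mk f * mk g := by
  let pointwiseMul : HomotopyGroup N M 1 → HomotopyGroup N M 1 → HomotopyGroup N M 1 :=
    Quotient.map₂ (· * ·) fun _ _ hf _ _ hg ↦ hf.mul hg
  have isUnital_pointwiseMul : EckmannHilton.IsUnital pointwiseMul (mk const) :=
    { left_id := by rintro ⟨f⟩; exact congrArg mk (one_mul f)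
      right_id := by rintro ⟨f⟩; exact congrArg mk (mul_one f) }
  have interchange : ∀ a b c d : HomotopyGroup N M 1,
      pointwiseMul a b * pointwiseMul c d = pointwiseMul (a * c) (b * d) := by
    rintro ⟨a⟩ ⟨b⟩ ⟨c⟩ ⟨d⟩
    let i := Classical.arbitrary N
    show mk (a * b) * mk (c * d) = pointwiseMul (mk a * mk c) (mk b * mk d)
    rw [mk_mul_mk i, mk_mul_mk i, mk_mul_mk i, ← transAt_mul_transAt]
    rfl
  have pointwiseMul_eq_mul :=
    EckmannHilton.mul EckmannHilton.MulOneClass.isUnital isUnital_pointwiseMul interchange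
  exact (congrFun₂ pointwiseMul_eq_mul (mk f) (mk g)).symm

def mkMonoidHom : Ω^ N M 1 →* HomotopyGroup N M 1 where
  toFun := mk
  map_one' := rfl
  map_mul' := mk_mul

end HomotopyGroup

/-- If `G` is a topological group in which `g ^ m = 1` for every `g`, then every element of
each higher homotopy group `πₙ(G, 1)`, `n ≥ 1`, satisfies `α ^ m = 1`. -/
theorem homotopyGroup_pow_eq_one_of_pow_eq_one (G : Type*) [TopologicalSpace G] [Group G]
    [IsTopologicalGroup G] (m : ℕ) (hm : ∀ g : G, g ^ m = 1) (n : ℕ)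
    (α : HomotopyGroup (Fin (n + 1)) G (1 : G)) : α ^ m = 1 := by
  induction α using Quotient.inductionOn with | h f => ?_
  have hf : f ^ m = 1 := GenLoop.ext _ _ fun y ↦ hm (f y)
  calc HomotopyGroup.mk f ^ m = HomotopyGroup.mkMonoidHom (f ^ m) :=
        (map_pow HomotopyGroup.mkMonoidHom f m).symm
    _ = 1 := by rw [hf, map_one]
end

section
/- Let X be a cosimplicial finite set, i.e., a functor X : SimplexCategory ⥤ FintypeCat, with coface maps d⁰ = X(δ₀) and d¹ = X(δ₁) from X[0] to X[1], and let L = {a ∈ X[0] | d⁰ a = d¹ a} be the equalizer (the limit of X). Consider the two maps P(d⁰), P(d¹) : Set (X[1]) → Set (X[0]) given by preimage along d⁰ and d¹. Then the restriction map Set (X[0]) → Set L, S ↦ {a ∈ L | a ∈ S} (preimage under the inclusion L ↪ X[0]), induces a bijection from the coequalizer in Type of P(d⁰) and P(d¹) onto Set L, the power set of L. -/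
/-!
The two coface maps `d⁰, d¹ : X[0] → X[1]` have the codegeneracy `s⁰` as a common retraction.
Hence `d⁰` and `d¹` are injective and `d⁰ a = d¹ b` forces `a = b`, so `(d⁰)⁻¹ (d¹ S) = S ∩ L`.
Restriction to `L` is surjective (extend by anything), and if `S ∩ L = S' ∩ L` then
`T = d⁰ S ∪ d¹ S'` satisfies `(d⁰)⁻¹ T = S ∪ (S' ∩ L) = S` and `(d¹)⁻¹ T = (S ∩ L) ∪ S' = S'`,
so `S` and `S'` are identified in the coequalizer.
-/

open CategoryTheory SimplexCategory Function Set

section CommonRetraction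

variable {A B : Type*} {f g : A → B} {r : B → A}

theorem preimage_image_eq_inter_eqLocus (hf : LeftInverse r f) (hg : LeftInverse r g)
    (S : Set A) : f ⁻¹' (g '' S) = {a | f a = g a} ∩ S := by
  ext a
  constructor
  · rintro ⟨x, hx, hxa⟩
    obtain rfl : x = a := by rw [← hg x, hxa, hf]
    exact ⟨hxa.symm, hx⟩
  · rintro ⟨hfg, ha⟩
    exact ⟨a, ha, hfg.symm⟩

theorem exists_preimage_eq_preimage_of_inter_eqLocus_eq (hf : LeftInverse r f)
    (hg : LeftInverse r g) {S S' : Set A}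
    (h : {a | f a = g a} ∩ S = {a | f a = g a} ∩ S') :
    ∃ T : Set B, f ⁻¹' T = S ∧ g ⁻¹' T = S' := by
  refine ⟨f '' S ∪ g '' S', ?_, ?_⟩
  · rw [preimage_union, hf.injective.preimage_image, preimage_image_eq_inter_eqLocus hf hg, ← h]
    exact union_eq_left.mpr inter_subset_right
  · have hgf : g ⁻¹' (f '' S) = {a | f a = g a} ∩ S := by
      simpa only [eq_comm] using preimage_image_eq_inter_eqLocus hg hf S
    rw [preimage_union, hg.injective.preimage_image, hgf, h]
    exact union_eq_right.mpr inter_subset_right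

theorem restrict_eqLocus_eq_of_preimage_eq_preimage (S S' : Set A)
    (h : ∃ T : Set B, f ⁻¹' T = S ∧ g ⁻¹' T = S') :
    (Subtype.val ⁻¹' S : Set {a // f a = g a}) = Subtype.val ⁻¹' S' := by
  obtain ⟨T, rfl, rfl⟩ := h
  ext a
  simp only [mem_preimage, a.2]

theorem bijective_quotLift_restrict_eqLocus (hf : LeftInverse r f) (hg : LeftInverse r g) :
    Bijective (Quot.lift (fun S : Set A => (Subtype.val ⁻¹' S : Set {a // f a = g a}))
      restrict_eqLocus_eq_of_preimage_eq_preimage :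
      Quot (fun S S' : Set A => ∃ T : Set B, f ⁻¹' T = S ∧ g ⁻¹' T = S') → _) := by
  refine ⟨?_, fun U => ⟨Quot.mk _ (Subtype.val '' U), preimage_image_eq U Subtype.val_injective⟩⟩
  rintro ⟨S⟩ ⟨S'⟩ h
  exact Quot.sound <| exists_preimage_eq_preimage_of_inter_eqLocus_eq hf hg <|
    Subtype.preimage_coe_eq_preimage_coe_iff.mp h

end CommonRetraction

theorem SimplexCategory.leftInverse_map_σ_map_δ (X : SimplexCategory ⥤ FintypeCat)
    (i : Fin 2) : LeftInverse (X.map (σ 0)) (X.map (δ i)) := fun a => by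
  have hδσ : δ i ≫ σ 0 = 𝟙 (mk 0) := by
    fin_cases i
    exacts [δ_comp_σ_self, δ_comp_σ_succ]
  rw [← FintypeCat.comp_apply, ← X.map_comp, hδσ, X.map_id, FintypeCat.id_apply]

/-- For a cosimplicial finite set `X` with coface maps `d⁰, d¹ : X[0] → X[1]` and
equalizer `L = {a | d⁰ a = d¹ a}`, the restriction map on power sets induces a bijection
from the coequalizer (in `Type`) of the preimage maps
`P(d⁰), P(d¹) : Set X[1] → Set X[0]` onto the power set of `L`. -/
theorem powerSet_coequalizer_bijective (X : SimplexCategory ⥤ FintypeCat) :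
    Function.Bijective
      (Quot.lift
        (fun S : Set (X.obj (mk 0)) =>
          (Subtype.val ⁻¹' S :
            Set {a : X.obj (mk 0) //
              X.map (δ (0 : Fin 2)) a = X.map (δ (1 : Fin 2)) a}))
        (fun S S' h => by
          obtain ⟨T, rfl, rfl⟩ := h
          ext a
          simpa using by rw [a.2] :
          ∀ S S', (∃ T : Set (X.obj (mk 1)),
              X.map (δ (0 : Fin 2)) ⁻¹' T = S ∧ X.map (δ (1 : Fin 2)) ⁻¹' T = S') →
            _ = _) :
        Quot (fun S S' : Set (X.obj (mk 0)) => ∃ T : Set (X.obj (mk 1)),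
            X.map (δ (0 : Fin 2)) ⁻¹' T = S ∧ X.map (δ (1 : Fin 2)) ⁻¹' T = S') →
          Set {a : X.obj (mk 0) //
            X.map (δ (0 : Fin 2)) a = X.map (δ (1 : Fin 2)) a}) :=
  bijective_quotLift_restrict_eqLocus (leftInverse_map_σ_map_δ X 0) (leftInverse_map_σ_map_δ X 1)
end
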